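/- (Hardy, subcritical case) For α, β > 0 with αβ < 1 and any d ≥ 0, there exist infinitely many linearly independent functions f ∈ L²(ℝ², ℍ) satisfying |f(x)|_Q ≤ C(1+|x|)^d e^{-πα|x|²} and ‖𝓕{f}(y)‖_Q ≤ C(1+|y|)^d e^{-πβ|y|²}; indeed for any δ with β < 1/δ < 1/α, every function g(x) = R(x) e^{-πδ|x|²} with R a polynomial of degree < d satisfies these conditions. -/

import Mathlib

open MeasureTheory Real

noncomputable section

abbrev ℍ : Type := Quaternion ℝ
def Qi : ℍ := ⟨0,1,0,0⟩
def Qj : ℍ := ⟨0,0,1,0⟩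

/-- e^{iθ} as a quaternion. -/
def expI (θ : ℝ) : ℍ := ⟨Real.cos θ, Real.sin θ, 0, 0⟩
/-- e^{jθ} as a quaternion. -/
def expJ (θ : ℝ) : ℍ := ⟨Real.cos θ, 0, Real.sin θ, 0⟩

/-- The two-sided quaternion Fourier transform. -/
def QFT (f : ℝ × ℝ → ℍ) (ξ : ℝ × ℝ) : ℍ :=
  ∫ x : ℝ × ℝ, expI (-(2 * π * ξ.1 * x.1)) * f x * expJ (-(2 * π * ξ.2 * x.2))

/-- Euclidean norm on ℝ². -/
def enorm2 (x : ℝ × ℝ) : ℝ := Real.sqrt (x.1 ^ 2 + x.2 ^ 2)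

/-- The m-th real component of f, viewed as a quaternion-valued function. -/
def qcomp (f : ℝ × ℝ → ℍ) (m : Fin 4) : ℝ × ℝ → ℍ :=
  fun x => match m with
  | 0 => ((f x).re : ℍ) | 1 => ((f x).imI : ℍ) | 2 => ((f x).imJ : ℍ) | 3 => ((f x).imK : ℍ)

/-- ‖𝓕{f}(ξ)‖_Q := √(Σ_m |𝓕{f_m}(ξ)|_Q²). -/
def QnormF (f : ℝ × ℝ → ℍ) (ξ : ℝ × ℝ) : ℝ :=
  Real.sqrt (∑ m : Fin 4, ‖QFT (qcomp f m) ξ‖ ^ 2)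

/-- A quaternion-coefficient polynomial on ℝ², given by its four real components. -/
def qpoly (c : Fin 4 → MvPolynomial (Fin 2) ℝ) (x : ℝ × ℝ) : ℍ :=
  ⟨MvPolynomial.eval ![x.1, x.2] (c 0), MvPolynomial.eval ![x.1, x.2] (c 1),
   MvPolynomial.eval ![x.1, x.2] (c 2), MvPolynomial.eval ![x.1, x.2] (c 3)⟩

/-!
For a real-valued `g₁(x₁) g₂(x₂)` the two exponentials of the quaternion Fourier transform
separate: its transform is `𝓕g₁(ξ₁)` embedded along `i` times `𝓕g₂(ξ₂)` embedded along `j`, so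
its norm is `‖𝓕g₁(ξ₁)‖ ‖𝓕g₂(ξ₂)‖`. Every real component of `R(x) e^{-πδ|x|²}` is a sum of such
products with `gₖ(t) = tᵏ e^{-πδt²}`, and `𝓕gₖ(ξ) = P(ξ) e^{-πξ²/δ}` for a polynomial `P`
(induction on `k`, using `𝓕(t f) = (-2πi)⁻¹ (𝓕f)'`). Polynomials are `O(e^{ε|x|²})` for every
`ε > 0`, so the gaps `α < δ` and `β < 1/δ` absorb them. Taking `R = x₁ⁿ` with `α < δ < 1/β`
gives the linearly independent family.
-/

open Asymptotics Filter Complex Polynomial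
open scoped Nat FourierTransform

lemma pow_isBigO_exp_mul_sq {ε : ℝ} (hε : 0 < ε) (k : ℕ) :
    (fun x : ℝ => x ^ k) =O[⊤] fun x => rexp (ε * x ^ 2) := by
  refine isBigO_top.2 ⟨1 + k ! / ε ^ k, fun x => ?_⟩
  have hexp : 1 ≤ rexp (ε * x ^ 2) := Real.one_le_exp (by positivity)
  have hsq : |x| ^ k ≤ 1 + (x ^ 2) ^ k := by
    have : (x ^ 2) ^ k = (|x| ^ k) ^ 2 := by rw [← sq_abs, ← pow_mul, ← pow_mul, mul_comm]
    nlinarith [sq_nonneg (|x| ^ k - 1), pow_nonneg (abs_nonneg x) k]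
  have hfac : (x ^ 2) ^ k ≤ k ! / ε ^ k * rexp (ε * x ^ 2) := by
    have := Real.pow_div_factorial_le_exp (x := ε * x ^ 2) (by positivity) k
    rw [mul_pow, div_le_iff₀ (by positivity)] at this
    rw [div_mul_eq_mul_div, le_div_iff₀ (by positivity)]
    linarith
  rw [norm_pow, Real.norm_eq_abs, Real.norm_of_nonneg (Real.exp_pos _).le]
  nlinarith

lemma Polynomial.eval_ofReal_isBigO_exp_mul_sq (P : ℂ[X]) {ε : ℝ} (hε : 0 < ε) :
    (fun x : ℝ => P.eval (x : ℂ)) =O[⊤] fun x => rexp (ε * x ^ 2) := by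
  induction P using Polynomial.induction_on' with
  | add p q hp hq => simpa only [eval_add] using hp.add hq
  | monomial n a =>
    have h : (fun x : ℝ => (x : ℂ) ^ n) =O[⊤] fun x : ℝ => x ^ n :=
      isBigO_of_le _ fun x => by simp
    simpa only [eval_monomial] using (h.trans (pow_isBigO_exp_mul_sq hε n)).const_mul_left a

lemma isBigO_top_prod_mul {α β R : Type*} [SeminormedRing R] {f₁ : α → R} {f₂ : β → R}
    {g₁ : α → ℝ} {g₂ : β → ℝ} (h₁ : f₁ =O[⊤] g₁) (h₂ : f₂ =O[⊤] g₂) :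
    (fun x : α × β => f₁ x.1 * f₂ x.2) =O[⊤] fun x => g₁ x.1 * g₂ x.2 :=
  (h₁.comp_tendsto (tendsto_top (f := Prod.fst))).mul
    (h₂.comp_tendsto (tendsto_top (f := Prod.snd)))

lemma Asymptotics.IsBigO.mul_exp {α R : Type*} [SeminormedRing R] {f g : α → R} {a b : α → ℝ}
    (hf : f =O[⊤] fun x => rexp (a x)) (hg : g =O[⊤] fun x => rexp (b x)) :
    (fun x => f x * g x) =O[⊤] fun x => rexp (a x + b x) :=
  (hf.mul hg).congr_right fun _ => (Real.exp_add _ _).symm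

lemma MvPolynomial.eval_isBigO_exp_mul_sq (p : MvPolynomial (Fin 2) ℝ) {ε : ℝ} (hε : 0 < ε) :
    (fun x : ℝ × ℝ => MvPolynomial.eval ![x.1, x.2] p) =O[⊤]
      fun x => rexp (ε * (x.1 ^ 2 + x.2 ^ 2)) := by
  induction p using MvPolynomial.induction_on' with
  | add p q hp hq => simpa only [map_add] using hp.add hq
  | monomial u a =>
    refine (((isBigO_top_prod_mul (pow_isBigO_exp_mul_sq hε (u 0))
      (pow_isBigO_exp_mul_sq hε (u 1))).const_mul_left a).congr_left fun x => ?_).congr_right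
      fun x => ?_
    · simp [MvPolynomial.eval_monomial, Finsupp.prod_pow, Fin.prod_univ_two]
    · rw [← Real.exp_add, mul_add]

lemma integrable_pow_mul_exp_neg_mul_sq {b : ℝ} (hb : 0 < b) (k : ℕ) :
    Integrable fun x : ℝ => x ^ k * rexp (-(b * x ^ 2)) := by
  simpa [Real.rpow_natCast] using
    integrable_rpow_mul_exp_neg_mul_sq hb (s := k) (by linarith [k.cast_nonneg (α := ℝ)])

lemma hasDerivAt_eval_mul_gaussian (P : ℂ[X]) (b : ℂ) (x : ℝ) :
    HasDerivAt (fun t : ℝ => P.eval (t : ℂ) * cexp (-(b * t ^ 2)))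
      ((derivative P - 2 * C b * X * P).eval (x : ℂ) * cexp (-(b * x ^ 2))) x := by
  have hE := ((hasDerivAt_pow 2 (x : ℂ)).const_mul b).neg.cexp
  convert ((P.hasDerivAt (x : ℂ)).mul hE).comp_ofReal using 1
  · rfl
  · simp only [eval_sub, eval_mul, eval_C, eval_X, eval_ofNat]
    norm_num
    ring

lemma fourier_ofReal_mul_eq_deriv {f : ℝ → ℂ} (hf : Integrable f)
    (hf' : Integrable fun x : ℝ => x * f x) :
    𝓕 (fun x : ℝ => x * f x) = fun ξ => (-2 * π * I)⁻¹ * deriv (𝓕 f) ξ := by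
  have hI : (-2 * π * I : ℂ) ≠ 0 := by simp [Real.pi_ne_zero, I_ne_zero]
  have hsmul : (fun x : ℝ => (-2 * π * I * x) • f x) = (-2 * π * I) • fun x : ℝ => x * f x := by
    ext x; simp only [smul_eq_mul, Pi.smul_apply]; ring
  rw [Real.deriv_fourier hf (by simpa only [real_smul] using hf'), hsmul]
  ext ξ
  simp only [Real.fourier_real_eq, Pi.smul_apply, smul_eq_mul, Circle.smul_def,
    mul_left_comm _ (-2 * π * I : ℂ), integral_const_mul]
  rw [mul_inv_cancel_left₀ hI]

theorem fourier_pow_mul_gaussian {δ : ℝ} (hδ : 0 < δ) (n : ℕ) :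
    ∃ P : ℂ[X], 𝓕 (fun x : ℝ => (x : ℂ) ^ n * cexp (-(π * δ * x ^ 2))) =
      fun ξ : ℝ => P.eval (ξ : ℂ) * cexp (-(π / δ * ξ ^ 2)) := by
  induction n with
  | zero =>
    refine ⟨C (1 / (δ : ℂ) ^ (1 / 2 : ℂ)), ?_⟩
    simpa [neg_mul, neg_div] using fourier_gaussian_pi (b := δ) (by simpa using hδ)
  | succ n ih =>
    obtain ⟨P, hP⟩ := ih
    have hint (k : ℕ) : Integrable fun x : ℝ => (x : ℂ) ^ k * cexp (-(π * δ * x ^ 2)) := by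
      simpa using (integrable_pow_mul_exp_neg_mul_sq (b := π * δ) (by positivity) k).ofReal (𝕜 := ℂ)
    have hsucc : (fun x : ℝ => (x : ℂ) ^ (n + 1) * cexp (-(π * δ * x ^ 2))) =
        fun x : ℝ => x * ((x : ℂ) ^ n * cexp (-(π * δ * x ^ 2))) := by
      ext x; ring
    refine ⟨C (-2 * π * I)⁻¹ * (derivative P - 2 * C (π / δ : ℂ) * X * P), ?_⟩
    rw [hsucc, fourier_ofReal_mul_eq_deriv (hint n) (hsucc ▸ hint (n + 1)), hP]
    ext ξ
    rw [(hasDerivAt_eval_mul_gaussian P (π / δ) ξ).deriv, eval_mul, eval_C]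
    ring

lemma fourier_pow_mul_gaussian_isBigO {δ β : ℝ} (hδ : 0 < δ) (hβδ : β < 1 / δ) (n : ℕ) :
    𝓕 (fun x : ℝ => ((x ^ n * rexp (-(π * δ * x ^ 2)) : ℝ) : ℂ)) =O[⊤]
      fun ξ => rexp (-(π * β * ξ ^ 2)) := by
  obtain ⟨P, hP⟩ := fourier_pow_mul_gaussian hδ n
  have hexp : (fun ξ : ℝ => cexp (-(π / δ * ξ ^ 2))) =O[⊤] fun ξ => rexp (-(π / δ * ξ ^ 2)) :=
    isBigO_of_le _ fun ξ => by
      rw [norm_exp, Real.norm_of_nonneg (Real.exp_pos _).le]; norm_cast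
  have h := (P.eval_ofReal_isBigO_exp_mul_sq (ε := π * (1 / δ - β))
    (mul_pos Real.pi_pos (sub_pos.2 hβδ))).mul_exp hexp
  push_cast
  rw [hP]
  exact h.congr_right fun ξ => by ring_nf

lemma Quaternion.norm_eq_sqrt (q : ℍ) :
    ‖q‖ = √(q.re ^ 2 + q.imI ^ 2 + q.imJ ^ 2 + q.imK ^ 2) := by
  rw [← normSq_def', normSq_eq_norm_mul_self, Real.sqrt_mul_self (norm_nonneg q)]

def ofComplexI : ℂ →ₗᵢ[ℝ] ℍ where
  toLinearMap := Quaternion.ofComplex.toLinearMap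
  norm_map' z := by
    rw [Quaternion.norm_eq_sqrt, Complex.norm_eq_sqrt_sq_add_sq]
    simp

def ofComplexJ : ℂ →ₗᵢ[ℝ] ℍ where
  toFun z := ⟨z.re, 0, z.im, 0⟩
  map_add' z w := by
    change (⟨(z + w).re, 0, (z + w).im, 0⟩ : ℍ) = ⟨z.re, 0, z.im, 0⟩ + ⟨w.re, 0, w.im, 0⟩
    ext <;> simp
  map_smul' r z := by
    change (⟨(r • z).re, 0, (r • z).im, 0⟩ : ℍ) = r • ⟨z.re, 0, z.im, 0⟩
    ext <;> simp
  norm_map' z := by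
    rw [Quaternion.norm_eq_sqrt, Complex.norm_eq_sqrt_sq_add_sq]
    congr 1
    change z.re ^ 2 + 0 ^ 2 + z.im ^ 2 + 0 ^ 2 = _
    ring

@[simp] lemma ofComplexJ_re (z : ℂ) : (ofComplexJ z).re = z.re := rfl
@[simp] lemma ofComplexJ_imI (z : ℂ) : (ofComplexJ z).imI = 0 := rfl
@[simp] lemma ofComplexJ_imJ (z : ℂ) : (ofComplexJ z).imJ = z.im := rfl
@[simp] lemma ofComplexJ_imK (z : ℂ) : (ofComplexJ z).imK = 0 := rfl

lemma ofComplexI_apply (z : ℂ) : ofComplexI z = z := rfl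

lemma expI_eq (θ : ℝ) : expI θ = ofComplexI (cexp (θ * I)) := by
  ext <;> simp [expI, ofComplexI_apply, exp_ofReal_mul_I_re, exp_ofReal_mul_I_im]

lemma expJ_eq (θ : ℝ) : expJ θ = ofComplexJ (cexp (θ * I)) := by
  ext <;> simp [expJ, exp_ofReal_mul_I_re, exp_ofReal_mul_I_im]

lemma ofComplexI_mul_coe (z : ℂ) (r : ℝ) : ofComplexI z * (r : ℍ) = ofComplexI (z * r) := by
  ext <;> simp [ofComplexI_apply]

lemma coe_mul_ofComplexJ (r : ℝ) (z : ℂ) : (r : ℍ) * ofComplexJ z = ofComplexJ (z * r) := by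
  ext <;> simp [mul_comm]

lemma norm_expI (θ : ℝ) : ‖expI θ‖ = 1 := by
  rw [expI_eq, LinearIsometry.norm_map, norm_exp_ofReal_mul_I]

lemma norm_expJ (θ : ℝ) : ‖expJ θ‖ = 1 := by
  rw [expJ_eq, LinearIsometry.norm_map, norm_exp_ofReal_mul_I]

lemma continuous_expI : Continuous expI := by
  simp_rw [funext expI_eq]; exact ofComplexI.continuous.comp (by fun_prop)

lemma continuous_expJ : Continuous expJ := by
  simp_rw [funext expJ_eq]; exact ofComplexJ.continuous.comp (by fun_prop)

lemma integrable_QFT_integrand {f : ℝ × ℝ → ℍ} (hf : Integrable f) (ξ : ℝ × ℝ) :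
    Integrable fun x : ℝ × ℝ => expI (-(2 * π * ξ.1 * x.1)) * f x * expJ (-(2 * π * ξ.2 * x.2)) :=
  (hf.bdd_mul (c := 1) (continuous_expI.comp (by fun_prop)).aestronglyMeasurable
      (ae_of_all _ fun _ => (norm_expI _).le)).mul_bdd (c := 1)
    (continuous_expJ.comp (by fun_prop)).aestronglyMeasurable
    (ae_of_all _ fun _ => (norm_expJ _).le)

lemma QFT_add {f g : ℝ × ℝ → ℍ} (hf : Integrable f) (hg : Integrable g) :
    QFT (f + g) = QFT f + QFT g := by
  ext1 ξ
  simp only [QFT, Pi.add_apply, mul_add, add_mul]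
  exact integral_add (integrable_QFT_integrand hf ξ) (integrable_QFT_integrand hg ξ)

lemma QFT_smul (a : ℝ) (f : ℝ × ℝ → ℍ) : QFT (a • f) = a • QFT f := by
  ext1 ξ
  simp only [QFT, Pi.smul_apply, mul_smul_comm, smul_mul_assoc, integral_smul]

lemma QFT_coe_mul_prod {g₁ g₂ : ℝ → ℝ} (h₁ : Integrable g₁) (h₂ : Integrable g₂) (ξ : ℝ × ℝ) :
    QFT (fun x => ((g₁ x.1 * g₂ x.2 : ℝ) : ℍ)) ξ =
      ofComplexI (𝓕 (fun t => (g₁ t : ℂ)) ξ.1) * ofComplexJ (𝓕 (fun t => (g₂ t : ℂ)) ξ.2) := by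
  set φ₁ : ℝ → ℂ := fun t => cexp (↑(-2 * π * t * ξ.1) * I) • (g₁ t : ℂ)
  set φ₂ : ℝ → ℂ := fun t => cexp (↑(-2 * π * t * ξ.2) * I) • (g₂ t : ℂ)
  have hφ {g : ℝ → ℝ} (hg : Integrable g) (s : ℝ) :
      Integrable fun t => cexp (↑(-2 * π * t * s) * I) • (g t : ℂ) :=
    hg.ofReal.bdd_mul (c := 1) (by fun_prop) (ae_of_all _ fun _ => (norm_exp_ofReal_mul_I _).le)
  have hprod (x : ℝ × ℝ) : expI (-(2 * π * ξ.1 * x.1)) * ((g₁ x.1 * g₂ x.2 : ℝ) : ℍ) *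
      expJ (-(2 * π * ξ.2 * x.2)) = ofComplexI (φ₁ x.1) * ofComplexJ (φ₂ x.2) := by
    rw [Quaternion.coe_mul, ← mul_assoc, mul_assoc, expI_eq, expJ_eq, ofComplexI_mul_coe,
      coe_mul_ofComplexJ]
    simp only [φ₁, φ₂, smul_eq_mul]
    ring_nf
  simp_rw [QFT, hprod, Measure.volume_eq_prod]
  have h := integral_prod_bilin (ContinuousLinearMap.mul ℝ ℍ)
    (ofComplexI.toContinuousLinearMap.integrable_comp (hφ h₁ ξ.1))
    (ofComplexJ.toContinuousLinearMap.integrable_comp (hφ h₂ ξ.2))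
  simp only [ContinuousLinearMap.mul_apply', LinearIsometry.coe_toContinuousLinearMap] at h
  rw [h, LinearIsometry.integral_comp_comm, LinearIsometry.integral_comp_comm,
    Real.fourier_real_eq_integral_exp_smul, Real.fourier_real_eq_integral_exp_smul]

lemma MeasureTheory.Integrable.coe_quaternion {α : Type*} [MeasurableSpace α] {μ : Measure α}
    {g : α → ℝ} (hg : Integrable g μ) : Integrable (fun x => (g x : ℍ)) μ :=
  (algebraMapCLM ℝ ℍ).integrable_comp hg

lemma integrable_exp_neg_mul_sq_add_sq {b : ℝ} (hb : 0 < b) :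
    Integrable fun x : ℝ × ℝ => rexp (-(b * (x.1 ^ 2 + x.2 ^ 2))) := by
  rw [Measure.volume_eq_prod]
  refine ((integrable_exp_neg_mul_sq hb).mul_prod (integrable_exp_neg_mul_sq hb)).congr
    (ae_of_all _ fun x => ?_)
  simp only [← Real.exp_add]
  ring_nf

def polyGaussian (δ : ℝ) (p : MvPolynomial (Fin 2) ℝ) (x : ℝ × ℝ) : ℝ :=
  MvPolynomial.eval ![x.1, x.2] p * rexp (-(π * δ * (x.1 ^ 2 + x.2 ^ 2)))

lemma polyGaussian_add (δ : ℝ) (p q : MvPolynomial (Fin 2) ℝ) :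
    polyGaussian δ (p + q) = polyGaussian δ p + polyGaussian δ q := by
  ext1 x; simp [polyGaussian, add_mul]

lemma polyGaussian_monomial (δ : ℝ) (u : Fin 2 →₀ ℕ) (a : ℝ) (x : ℝ × ℝ) :
    polyGaussian δ (MvPolynomial.monomial u a) x =
      a * ((x.1 ^ u 0 * rexp (-(π * δ * x.1 ^ 2))) * (x.2 ^ u 1 * rexp (-(π * δ * x.2 ^ 2)))) := by
  simp only [polyGaussian, MvPolynomial.eval_monomial, Finsupp.prod_pow, Fin.prod_univ_two,
    Matrix.cons_val_zero, Matrix.cons_val_one, mul_add, neg_add, Real.exp_add]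
  ring

lemma polyGaussian_isBigO {γ δ : ℝ} (hγδ : γ < δ) (p : MvPolynomial (Fin 2) ℝ) :
    polyGaussian δ p =O[⊤] fun x => rexp (-(π * γ * (x.1 ^ 2 + x.2 ^ 2))) :=
  ((p.eval_isBigO_exp_mul_sq (mul_pos Real.pi_pos (sub_pos.2 hγδ))).mul_exp
    (isBigO_refl _ _)).congr_right fun _ => by ring_nf

lemma integrable_polyGaussian {δ : ℝ} (hδ : 0 < δ) (p : MvPolynomial (Fin 2) ℝ) :
    Integrable (polyGaussian δ p) :=
  (polyGaussian_isBigO (half_lt_self hδ) p).integrable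
    ((p.continuous_eval.comp (by fun_prop)).mul (by fun_prop)).aestronglyMeasurable
    (integrable_exp_neg_mul_sq_add_sq (by positivity))

lemma QFT_polyGaussian_isBigO {δ β : ℝ} (hδ : 0 < δ) (hβδ : β < 1 / δ)
    (p : MvPolynomial (Fin 2) ℝ) :
    QFT (fun x => (polyGaussian δ p x : ℍ)) =O[⊤]
      fun ξ => rexp (-(π * β * (ξ.1 ^ 2 + ξ.2 ^ 2))) := by
  induction p using MvPolynomial.induction_on' with
  | add p q hp hq =>
    have hsplit : (fun x => (polyGaussian δ (p + q) x : ℍ)) =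
        (fun x => (polyGaussian δ p x : ℍ)) + fun x => (polyGaussian δ q x : ℍ) := by
      ext1 x; simp [polyGaussian_add]
    rw [hsplit, QFT_add (integrable_polyGaussian hδ p).coe_quaternion
      (integrable_polyGaussian hδ q).coe_quaternion]
    exact hp.add hq
  | monomial u a =>
    set g : ℕ → ℝ → ℝ := fun k t => t ^ k * rexp (-(π * δ * t ^ 2))
    have hg (k : ℕ) : Integrable (g k) := integrable_pow_mul_exp_neg_mul_sq (by positivity) k
    have hmono : (fun x => (polyGaussian δ (MvPolynomial.monomial u a) x : ℍ)) =
        a • fun x => ((g (u 0) x.1 * g (u 1) x.2 : ℝ) : ℍ) := by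
      ext1 x
      rw [polyGaussian_monomial, Pi.smul_apply, ← Quaternion.coe_smul, smul_eq_mul]
    rw [hmono, QFT_smul]
    refine ((isBigO_of_le _ fun ξ => ?_).trans (isBigO_top_prod_mul
      (fourier_pow_mul_gaussian_isBigO hδ hβδ (u 0))
      (fourier_pow_mul_gaussian_isBigO hδ hβδ (u 1)))).const_smul_left a |>.congr_right fun ξ => ?_
    · rw [QFT_coe_mul_prod (hg _) (hg _), norm_mul, norm_mul, LinearIsometry.norm_map,
        LinearIsometry.norm_map]
    · rw [← Real.exp_add]
      ring_nf

lemma Real.sqrt_sum_sq_le_sum_abs {ι : Type*} (s : Finset ι) (f : ι → ℝ) :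
    √(∑ i ∈ s, f i ^ 2) ≤ ∑ i ∈ s, |f i| := by
  calc √(∑ i ∈ s, f i ^ 2) = √(∑ i ∈ s, |f i| ^ 2) := by simp_rw [sq_abs]
    _ ≤ √((∑ i ∈ s, |f i|) ^ 2) :=
      Real.sqrt_le_sqrt (Finset.sum_sq_le_sq_sum_of_nonneg fun i _ => abs_nonneg (f i))
    _ = ∑ i ∈ s, |f i| := Real.sqrt_sq (Finset.sum_nonneg fun i _ => abs_nonneg (f i))

lemma QnormF_le_sum (f : ℝ × ℝ → ℍ) (ξ : ℝ × ℝ) :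
    QnormF f ξ ≤ ∑ m, ‖QFT (qcomp f m) ξ‖ := by
  rw [QnormF]
  simpa only [abs_norm] using Real.sqrt_sum_sq_le_sum_abs Finset.univ fun m => ‖QFT (qcomp f m) ξ‖

section qpoly

variable (c : Fin 4 → MvPolynomial (Fin 2) ℝ) (x : ℝ × ℝ)

@[simp] lemma qpoly_re : (qpoly c x).re = MvPolynomial.eval ![x.1, x.2] (c 0) := rfl
@[simp] lemma qpoly_imI : (qpoly c x).imI = MvPolynomial.eval ![x.1, x.2] (c 1) := rfl
@[simp] lemma qpoly_imJ : (qpoly c x).imJ = MvPolynomial.eval ![x.1, x.2] (c 2) := rfl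
@[simp] lemma qpoly_imK : (qpoly c x).imK = MvPolynomial.eval ![x.1, x.2] (c 3) := rfl

lemma norm_qpoly_le : ‖qpoly c x‖ ≤ ∑ m, |MvPolynomial.eval ![x.1, x.2] (c m)| := by
  rw [Quaternion.norm_eq_sqrt]
  simpa [Fin.sum_univ_four, add_assoc] using
    Real.sqrt_sum_sq_le_sum_abs Finset.univ fun m => MvPolynomial.eval ![x.1, x.2] (c m)

lemma continuous_qpoly : Continuous (qpoly c) := by
  have : qpoly c = fun x => Quaternion.linearIsometryEquivTuple.symm
      (WithLp.toLp 2 fun m => MvPolynomial.eval ![x.1, x.2] (c m)) := rfl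
  rw [this]
  exact Quaternion.linearIsometryEquivTuple.symm.continuous.comp ((PiLp.continuous_toLp 2 _).comp
    (continuous_pi fun m => (c m).continuous_eval.comp (by fun_prop)))

lemma qcomp_qpoly_mul_coe (g : ℝ × ℝ → ℝ) (m : Fin 4) :
    qcomp (fun x => qpoly c x * (g x : ℍ)) m =
      fun x => ((MvPolynomial.eval ![x.1, x.2] (c m) * g x : ℝ) : ℍ) := by
  ext1 x
  fin_cases m <;> simp [qcomp, Quaternion.mul_coe_eq_smul, mul_comm]

end qpoly

lemma qpoly_mul_gaussian_isBigO {γ δ : ℝ} (hγδ : γ < δ) (c : Fin 4 → MvPolynomial (Fin 2) ℝ) :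
    (fun x => qpoly c x * ((rexp (-(π * δ * (x.1 ^ 2 + x.2 ^ 2))) : ℝ) : ℍ))
      =O[⊤] fun x => rexp (-(π * γ * (x.1 ^ 2 + x.2 ^ 2))) := by
  set E : ℝ × ℝ → ℝ := fun x => rexp (-(π * δ * (x.1 ^ 2 + x.2 ^ 2)))
  have hle (x : ℝ × ℝ) : ‖qpoly c x * (E x : ℍ)‖ ≤ ‖∑ m, ‖polyGaussian δ (c m) x‖‖ := by
    have hE : 0 ≤ E x := (Real.exp_pos _).le
    calc ‖qpoly c x * (E x : ℍ)‖ = ‖qpoly c x‖ * E x := by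
          rw [norm_mul, Quaternion.norm_coe, Real.norm_of_nonneg hE]
      _ ≤ (∑ m, |MvPolynomial.eval ![x.1, x.2] (c m)|) * E x :=
          mul_le_mul_of_nonneg_right (norm_qpoly_le c x) hE
      _ = ∑ m, ‖polyGaussian δ (c m) x‖ := by
          simp only [polyGaussian, Finset.sum_mul, norm_mul, Real.norm_eq_abs, abs_of_nonneg hE, E]
      _ ≤ _ := le_abs_self _
  exact (isBigO_of_le _ hle).trans
    (IsBigO.fun_sum (s := Finset.univ) fun m _ => (polyGaussian_isBigO hγδ (c m)).norm_left)

lemma QnormF_qpoly_mul_gaussian_isBigO {δ β : ℝ} (hδ : 0 < δ) (hβδ : β < 1 / δ)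
    (c : Fin 4 → MvPolynomial (Fin 2) ℝ) :
    QnormF (fun x => qpoly c x * ((rexp (-(π * δ * (x.1 ^ 2 + x.2 ^ 2))) : ℝ) : ℍ))
      =O[⊤] fun ξ => rexp (-(π * β * (ξ.1 ^ 2 + ξ.2 ^ 2))) := by
  refine (isBigO_of_le _ fun ξ => ?_).trans (IsBigO.fun_sum (s := Finset.univ) fun m _ =>
    (QFT_polyGaussian_isBigO hδ hβδ (c m)).norm_left)
  have hcomp (m : Fin 4) :
      qcomp (fun x => qpoly c x * ((rexp (-(π * δ * (x.1 ^ 2 + x.2 ^ 2))) : ℝ) : ℍ)) m =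
        fun x => (polyGaussian δ (c m) x : ℍ) :=
    qcomp_qpoly_mul_coe c _ m
  have h := QnormF_le_sum (fun x => qpoly c x * ((rexp (-(π * δ * (x.1 ^ 2 + x.2 ^ 2))) : ℝ) : ℍ)) ξ
  simp only [hcomp] at h
  exact (Real.norm_of_nonneg (Real.sqrt_nonneg _)).trans_le (h.trans (le_abs_self _))

lemma memLp_two_of_isBigO_gaussian {E : Type*} [NormedAddCommGroup E] {f : ℝ × ℝ → E}
    (hf : AEStronglyMeasurable f) {b : ℝ} (hb : 0 < b)
    (h : f =O[⊤] fun x => rexp (-(b * (x.1 ^ 2 + x.2 ^ 2)))) : MemLp f 2 := by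
  obtain ⟨C, hC⟩ := isBigO_top.1 h
  have hg : MemLp (fun x : ℝ × ℝ => rexp (-(b * (x.1 ^ 2 + x.2 ^ 2)))) 2 := by
    rw [memLp_two_iff_integrable_sq_norm (by fun_prop : Continuous _).aestronglyMeasurable]
    refine (integrable_exp_neg_mul_sq_add_sq (mul_pos two_pos hb)).congr (ae_of_all _ fun x => ?_)
    simp only [Real.norm_of_nonneg (Real.exp_pos _).le, sq, ← Real.exp_add]
    ring_nf
  exact hg.of_le_mul hf (ae_of_all _ hC)

lemma memLp_qpoly_mul_gaussian {δ : ℝ} (hδ : 0 < δ) (c : Fin 4 → MvPolynomial (Fin 2) ℝ) :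
    MemLp (fun x => qpoly c x * ((rexp (-(π * δ * (x.1 ^ 2 + x.2 ^ 2))) : ℝ) : ℍ)) 2 :=
  memLp_two_of_isBigO_gaussian
    ((continuous_qpoly c).mul (Quaternion.continuous_coe.comp (by fun_prop))).aestronglyMeasurable
    (by positivity) (qpoly_mul_gaussian_isBigO (half_lt_self hδ) c)

lemma linearIndependent_qpoly_X_pow_mul_gaussian (δ : ℝ) :
    LinearIndependent ℝ fun n : ℕ => fun x : ℝ × ℝ => qpoly ![MvPolynomial.X 0 ^ n, 0, 0, 0] x *
      ((rexp (-(π * δ * (x.1 ^ 2 + x.2 ^ 2))) : ℝ) : ℍ) := by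
  let L : ℝ[X] →ₗ[ℝ] (ℝ × ℝ → ℍ) :=
    { toFun := fun P x => ((P.eval x.1 * rexp (-(π * δ * (x.1 ^ 2 + x.2 ^ 2))) : ℝ) : ℍ)
      map_add' := fun P Q => by ext1 x; simp [add_mul]
      map_smul' := fun a P => by
        ext1 x
        simp only [eval_smul, smul_eq_mul, Pi.smul_apply, RingHom.id_apply, ← Quaternion.coe_smul,
          mul_assoc] }
  have hL : LinearMap.ker L = ⊥ := by
    refine LinearMap.ker_eq_bot'.2 fun P hP => Polynomial.funext fun t => ?_
    have h : ((P.eval t * rexp (-(π * δ * (t ^ 2 + 0 ^ 2))) : ℝ) : ℍ) = ((0 : ℝ) : ℍ) :=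
      congrFun hP (t, 0)
    simpa [Real.exp_ne_zero] using Quaternion.coe_injective h
  have hF : (fun n : ℕ => fun x : ℝ × ℝ => qpoly ![MvPolynomial.X 0 ^ n, 0, 0, 0] x *
      ((rexp (-(π * δ * (x.1 ^ 2 + x.2 ^ 2))) : ℝ) : ℍ)) = L ∘ Polynomial.basisMonomials ℝ := by
    ext1 n; ext1 x
    rw [Quaternion.mul_coe_eq_smul]
    ext <;> simp [L, Polynomial.coe_basisMonomials, mul_comm, -Quaternion.coe_pow]
  rw [hF]
  exact (Polynomial.basisMonomials ℝ).linearIndependent.map' L hL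

lemma exists_weighted_bounds {d α β : ℝ} (hd : 0 ≤ d) {f : ℝ × ℝ → ℍ} {Φ : ℝ × ℝ → ℝ}
    (hf : f =O[⊤] fun x => rexp (-(π * α * (x.1 ^ 2 + x.2 ^ 2))))
    (hΦ : Φ =O[⊤] fun y => rexp (-(π * β * (y.1 ^ 2 + y.2 ^ 2)))) :
    ∃ C : ℝ, 0 < C ∧
      (∀ x, ‖f x‖ ≤ C * (1 + enorm2 x) ^ d * rexp (-(π * α * (x.1 ^ 2 + x.2 ^ 2)))) ∧
      ∀ y, Φ y ≤ C * (1 + enorm2 y) ^ d * rexp (-(π * β * (y.1 ^ 2 + y.2 ^ 2))) := by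
  obtain ⟨C₁, hC₁, h₁⟩ := hf.exists_pos
  obtain ⟨C₂, hC₂, h₂⟩ := hΦ.exists_pos
  have hweight (x : ℝ × ℝ) : 1 ≤ (1 + enorm2 x) ^ d :=
    Real.one_le_rpow (le_add_of_nonneg_right (Real.sqrt_nonneg _)) hd
  have hlift {C a E w : ℝ} (ha : a ≤ C * ‖E‖) (hC : C ≤ C₁ + C₂) (hE : 0 < E) (hw : 1 ≤ w) :
      a ≤ (C₁ + C₂) * w * E := by
    rw [Real.norm_of_nonneg hE.le] at ha
    nlinarith [mul_le_mul_of_nonneg_right hC hE.le, mul_pos (add_pos hC₁ hC₂) hE]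
  refine ⟨C₁ + C₂, add_pos hC₁ hC₂, fun x => ?_, fun y => ?_⟩
  · exact hlift (isBigOWith_top.1 h₁ x) (by linarith) (Real.exp_pos _) (hweight x)
  · exact hlift ((le_abs_self _).trans (isBigOWith_top.1 h₂ y)) (by linarith) (Real.exp_pos _)
      (hweight y)

theorem hardy_qft_subcritical_general (d α β : ℝ) (hd : 0 ≤ d) (hα : 0 < α)
    (hαβ : α * β < 1) :
    (∃ F : ℕ → (ℝ × ℝ → ℍ), LinearIndependent ℝ F ∧
      ∀ n : ℕ, MemLp (F n) 2 (volume : Measure (ℝ × ℝ)) ∧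
        ∃ C : ℝ, 0 < C ∧
          (∀ x : ℝ × ℝ, ‖F n x‖ ≤
            C * (1 + enorm2 x) ^ d * Real.exp (-(π * α * (x.1 ^ 2 + x.2 ^ 2)))) ∧
          (∀ y : ℝ × ℝ, QnormF (F n) y ≤
            C * (1 + enorm2 y) ^ d * Real.exp (-(π * β * (y.1 ^ 2 + y.2 ^ 2))))) ∧
    ∀ δ : ℝ, 0 < δ → β < 1 / δ → 1 / δ < 1 / α →
      ∀ c : Fin 4 → MvPolynomial (Fin 2) ℝ, (∀ i, c i ≠ 0 → ((c i).totalDegree : ℝ) < d) →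
        ∃ C : ℝ, 0 < C ∧
          (∀ x : ℝ × ℝ,
            ‖qpoly c x * ((Real.exp (-(π * δ * (x.1 ^ 2 + x.2 ^ 2))) : ℝ) : ℍ)‖ ≤
              C * (1 + enorm2 x) ^ d * Real.exp (-(π * α * (x.1 ^ 2 + x.2 ^ 2)))) ∧
          (∀ y : ℝ × ℝ,
            QnormF (fun x => qpoly c x * ((Real.exp (-(π * δ * (x.1 ^ 2 + x.2 ^ 2))) : ℝ) : ℍ)) y ≤
              C * (1 + enorm2 y) ^ d * Real.exp (-(π * β * (y.1 ^ 2 + y.2 ^ 2)))) := by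
  refine ⟨?_, fun δ hδ hβδ hδα c _ => exists_weighted_bounds hd
    (qpoly_mul_gaussian_isBigO ((one_div_lt_one_div hδ hα).1 hδα) c)
    (QnormF_qpoly_mul_gaussian_isBigO hδ hβδ c)⟩
  obtain ⟨t, hβt, htα⟩ : ∃ t, max β 0 < t ∧ t < 1 / α :=
    exists_between (max_lt ((lt_div_iff₀ hα).2 (by linarith)) (by positivity))
  have ht : 0 < t := (le_max_right β 0).trans_lt hβt
  have hβδ : β < 1 / (1 / t) := by rw [one_div_one_div]; exact (le_max_left β 0).trans_lt hβt
  exact ⟨_, linearIndependent_qpoly_X_pow_mul_gaussian (1 / t), fun n =>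
    ⟨memLp_qpoly_mul_gaussian (by positivity) _, exists_weighted_bounds hd
      (qpoly_mul_gaussian_isBigO ((lt_one_div hα ht).2 htα) _)
      (QnormF_qpoly_mul_gaussian_isBigO (by positivity) hβδ _)⟩⟩

/-- Hardy's theorem, subcritical case: αβ < 1 admits infinitely many linearly
independent solutions, including all R(x)e^{-πδ|x|²} with deg R < d. -/
theorem hardy_qft_subcritical (d α β : ℝ) (hd : 0 ≤ d) (hα : 0 < α) (hβ : 0 < β)
    (hαβ : α * β < 1) :
    (∃ F : ℕ → (ℝ × ℝ → ℍ), LinearIndependent ℝ F ∧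
      ∀ n : ℕ, MemLp (F n) 2 (volume : Measure (ℝ × ℝ)) ∧
        ∃ C : ℝ, 0 < C ∧
          (∀ x : ℝ × ℝ, ‖F n x‖ ≤
            C * (1 + enorm2 x) ^ d * Real.exp (-(π * α * (x.1 ^ 2 + x.2 ^ 2)))) ∧
          (∀ y : ℝ × ℝ, QnormF (F n) y ≤
            C * (1 + enorm2 y) ^ d * Real.exp (-(π * β * (y.1 ^ 2 + y.2 ^ 2))))) ∧
    ∀ δ : ℝ, 0 < δ → β < 1 / δ → 1 / δ < 1 / α →
      ∀ c : Fin 4 → MvPolynomial (Fin 2) ℝ, (∀ i, c i ≠ 0 → ((c i).totalDegree : ℝ) < d) →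
        ∃ C : ℝ, 0 < C ∧
          (∀ x : ℝ × ℝ,
            ‖qpoly c x * ((Real.exp (-(π * δ * (x.1 ^ 2 + x.2 ^ 2))) : ℝ) : ℍ)‖ ≤
              C * (1 + enorm2 x) ^ d * Real.exp (-(π * α * (x.1 ^ 2 + x.2 ^ 2)))) ∧
          (∀ y : ℝ × ℝ,
            QnormF (fun x => qpoly c x * ((Real.exp (-(π * δ * (x.1 ^ 2 + x.2 ^ 2))) : ℝ) : ℍ)) y ≤
              C * (1 + enorm2 y) ^ d * Real.exp (-(π * β * (y.1 ^ 2 + y.2 ^ 2)))) :=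
  hardy_qft_subcritical_general d α β hd hα hαβ
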